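/- Let G_{α+1/2} = ∂_t Σ_{j=1}^α h_j + ∂_x Σ_{j=1}^α (h_j u_j). Then for each α the z-moment equation ∂/∂t ( (z_{α+1/2}² − z_{α−1/2}²)/2 ) + ∂/∂x ( (z_{α+1/2}² − z_{α−1/2}²)/2 · u_α ) = h_α w_α + z_{α+1/2} G_{α+1/2} − z_{α−1/2} G_{α−1/2} holds if and only if w_α = − (1/2) ∂_x(h_α u_α) − Σ_{j=1}^{α−1} ∂_x(h_j u_j) + u_α ∂_x z_α. -/

import Mathlib

/-- ∂/∂x of a function of (x,t). -/
noncomputable def pdx (f : ℝ → ℝ → ℝ) (x t : ℝ) : ℝ := deriv (fun x' => f x' t) x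

/-- ∂/∂t of a function of (x,t). -/
noncomputable def pdt (f : ℝ → ℝ → ℝ) (x t : ℝ) : ℝ := deriv (fun t' => f x t') t

/-- Interface heights `z_{α+1/2} = z_b + Σ_{j=1}^α l_j H`. -/
noncomputable def zhalf (zb : ℝ → ℝ) (H : ℝ → ℝ → ℝ) (l : ℕ → ℝ) (α : ℕ) (x t : ℝ) : ℝ :=
  zb x + ∑ j ∈ Finset.Icc 1 α, l j * H x t

/-- Layer midpoints `z_α = (z_{α+1/2} + z_{α−1/2})/2`. -/
noncomputable def zc (zb : ℝ → ℝ) (H : ℝ → ℝ → ℝ) (l : ℕ → ℝ) (α : ℕ) (x t : ℝ) : ℝ :=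
  (zhalf zb H l α x t + zhalf zb H l (α - 1) x t) / 2

/-- Mass exchange terms `G_{α+1/2} = ∂_t Σ_{j=1}^α h_j + ∂_x Σ_{j=1}^α h_j u_j`. -/
noncomputable def Gex (H : ℝ → ℝ → ℝ) (l : ℕ → ℝ) (u : ℕ → ℝ → ℝ → ℝ) (α : ℕ) (x t : ℝ) : ℝ :=
  deriv (fun t' => ∑ j ∈ Finset.Icc 1 α, l j * H x t') t
    + deriv (fun x' => ∑ j ∈ Finset.Icc 1 α, l j * H x' t * u j x' t) x

/-! The time derivatives cancel exactly: `∂_t z_{α±1/2}` is the `∂_t` part of `G_{α±1/2}`, so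
`z_{α+1/2} G_{α+1/2} − z_{α−1/2} G_{α−1/2}` removes the whole time derivative of the moment. What is
left is an algebraic identity in the `x`-derivatives, resting on `h_α = z_{α+1/2} − z_{α−1/2}`,
`(z_{α+1/2}² − z_{α−1/2}²)/2 = h_α z_α` and `G_{α+1/2} − G_{α−1/2} = ∂_t h_α + ∂_x(h_α u_α)`;
since `h_α > 0`, the moment equation can then be divided by `h_α`. -/

open Finset

theorem differentiableAt_fst_slice {f : ℝ → ℝ → ℝ}
    (hf : Differentiable ℝ (fun q : ℝ × ℝ => f q.1 q.2)) (x t : ℝ) :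
    DifferentiableAt ℝ (fun x' => f x' t) x :=
  (hf.comp (differentiable_id.prodMk (differentiable_const t))) x

theorem differentiableAt_snd_slice {f : ℝ → ℝ → ℝ}
    (hf : Differentiable ℝ (fun q : ℝ × ℝ => f q.1 q.2)) (x t : ℝ) :
    DifferentiableAt ℝ (fun t' => f x t') t :=
  (hf.comp ((differentiable_const x).prodMk differentiable_id)) t

theorem hasDerivAt_half_sq_sub_sq {f g : ℝ → ℝ} {x : ℝ}
    (hf : DifferentiableAt ℝ f x) (hg : DifferentiableAt ℝ g x) :
    HasDerivAt (fun y => (f y ^ 2 - g y ^ 2) / 2) (f x * deriv f x - g x * deriv g x) x :=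
  (((hf.hasDerivAt.fun_pow 2).fun_sub (hg.hasDerivAt.fun_pow 2)).div_const 2).congr_deriv
    (by push_cast; ring)

theorem pdt_half_sq_sub_sq {f g : ℝ → ℝ → ℝ} {x t : ℝ}
    (hf : DifferentiableAt ℝ (fun t' => f x t') t) (hg : DifferentiableAt ℝ (fun t' => g x t') t) :
    pdt (fun x' t' => (f x' t' ^ 2 - g x' t' ^ 2) / 2) x t
      = f x t * pdt f x t - g x t * pdt g x t :=
  (hasDerivAt_half_sq_sub_sq hf hg).deriv

theorem pdx_half_sq_sub_sq_mul {f g v : ℝ → ℝ → ℝ} {x t : ℝ}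
    (hf : DifferentiableAt ℝ (fun x' => f x' t) x) (hg : DifferentiableAt ℝ (fun x' => g x' t) x)
    (hv : DifferentiableAt ℝ (fun x' => v x' t) x) :
    pdx (fun x' t' => (f x' t' ^ 2 - g x' t' ^ 2) / 2 * v x' t') x t
      = (f x t * pdx f x t - g x t * pdx g x t) * v x t
        + (f x t ^ 2 - g x t ^ 2) / 2 * pdx v x t :=
  ((hasDerivAt_half_sq_sub_sq hf hg).mul hv.hasDerivAt).deriv

theorem zhalf_succ_sub_zhalf (zb : ℝ → ℝ) (H : ℝ → ℝ → ℝ) (l : ℕ → ℝ) (β : ℕ) (x t : ℝ) :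
    zhalf zb H l (β + 1) x t - zhalf zb H l β x t = l (β + 1) * H x t := by
  simp only [zhalf, sum_Icc_succ_top (Nat.le_add_left 1 β)]
  ring

theorem pdx_zc (zb : ℝ → ℝ) (H : ℝ → ℝ → ℝ) (l : ℕ → ℝ) (α : ℕ) (x t : ℝ)
    (hp : DifferentiableAt ℝ (fun x' => zhalf zb H l α x' t) x)
    (hm : DifferentiableAt ℝ (fun x' => zhalf zb H l (α - 1) x' t) x) :
    pdx (zc zb H l α) x t = (pdx (zhalf zb H l α) x t + pdx (zhalf zb H l (α - 1)) x t) / 2 :=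
  ((hp.hasDerivAt.add hm.hasDerivAt).div_const 2).deriv

section Layers

variable {zb : ℝ → ℝ} {H : ℝ → ℝ → ℝ} (l : ℕ → ℝ) {u : ℕ → ℝ → ℝ → ℝ}

theorem differentiableAt_zhalf_x (hzb : Differentiable ℝ zb)
    (hH : Differentiable ℝ (fun q : ℝ × ℝ => H q.1 q.2)) (α : ℕ) (x t : ℝ) :
    DifferentiableAt ℝ (fun x' => zhalf zb H l α x' t) x :=
  (hzb x).add (DifferentiableAt.fun_sum fun _ _ => (differentiableAt_fst_slice hH x t).const_mul _)

theorem differentiableAt_zhalf_t (hH : Differentiable ℝ (fun q : ℝ × ℝ => H q.1 q.2))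
    (α : ℕ) (x t : ℝ) :
    DifferentiableAt ℝ (fun t' => zhalf zb H l α x t') t :=
  (differentiableAt_const _).add
    (DifferentiableAt.fun_sum fun _ _ => (differentiableAt_snd_slice hH x t).const_mul _)

theorem differentiableAt_layer_flux (hH : Differentiable ℝ (fun q : ℝ × ℝ => H q.1 q.2))
    (hu : ∀ j, Differentiable ℝ (fun q : ℝ × ℝ => u j q.1 q.2)) (j : ℕ) (x t : ℝ) :
    DifferentiableAt ℝ (fun x' => l j * H x' t * u j x' t) x :=
  ((differentiableAt_fst_slice hH x t).const_mul _).mul (differentiableAt_fst_slice (hu j) x t)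

theorem Gex_eq_pdt_zhalf_add_sum_pdx (hH : Differentiable ℝ (fun q : ℝ × ℝ => H q.1 q.2))
    (hu : ∀ j, Differentiable ℝ (fun q : ℝ × ℝ => u j q.1 q.2)) (α : ℕ) (x t : ℝ) :
    Gex H l u α x t = pdt (zhalf zb H l α) x t
      + ∑ j ∈ Icc 1 α, pdx (fun x' t' => l j * H x' t' * u j x' t') x t := by
  unfold Gex pdt pdx zhalf
  rw [deriv_const_add, deriv_fun_sum fun j _ => differentiableAt_layer_flux l hH hu j x t]

theorem pdx_layer_flux (hzb : Differentiable ℝ zb)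
    (hH : Differentiable ℝ (fun q : ℝ × ℝ => H q.1 q.2))
    (hu : ∀ j, Differentiable ℝ (fun q : ℝ × ℝ => u j q.1 q.2)) (β : ℕ) (x t : ℝ) :
    pdx (fun x' t' => l (β + 1) * H x' t' * u (β + 1) x' t') x t
      = (pdx (zhalf zb H l (β + 1)) x t - pdx (zhalf zb H l β) x t) * u (β + 1) x t
        + (zhalf zb H l (β + 1) x t - zhalf zb H l β x t) * pdx (u (β + 1)) x t := by
  have hsub := ((differentiableAt_zhalf_x l hzb hH (β + 1) x t).hasDerivAt.sub
    (differentiableAt_zhalf_x l hzb hH β x t).hasDerivAt).mul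
    (differentiableAt_fst_slice (hu (β + 1)) x t).hasDerivAt
  simp only [← zhalf_succ_sub_zhalf zb H l β] at hsub ⊢
  exact hsub.deriv

end Layers

/-- `zp, zm` stand for `z_{α±1/2}`, `qp, qm` and `pp, pm` for their `t`- and `x`-derivatives,
`v` for `u_α` and `S` for `Σ_{j<α} ∂_x(h_j u_j)`. -/
theorem moment_eq_iff {zp zm qp qm pp pm v vx S w : ℝ} (hh : zp - zm ≠ 0) :
    zp * qp - zm * qm + ((zp * pp - zm * pm) * v + (zp ^ 2 - zm ^ 2) / 2 * vx)
        = (zp - zm) * w + zp * (qp + (S + ((pp - pm) * v + (zp - zm) * vx))) - zm * (qm + S)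
      ↔ w = -(1 / 2) * ((pp - pm) * v + (zp - zm) * vx) - S + v * ((pp + pm) / 2) := by
  constructor
  · intro hE
    refine mul_left_cancel₀ hh ?_
    linear_combination -hE
  · rintro rfl
    ring

theorem stmt13_general (N : ℕ) (l : ℕ → ℝ)
    (hl : ∀ j ∈ Finset.Icc 1 N, 0 < l j)
    (zb : ℝ → ℝ) (H : ℝ → ℝ → ℝ)
    (hzb : ContDiff ℝ (⊤ : ℕ∞) zb)
    (hH : ContDiff ℝ (⊤ : ℕ∞) (fun q : ℝ × ℝ => H q.1 q.2))
    (hHpos : ∀ x t : ℝ, 0 < H x t)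
    (u w : ℕ → ℝ → ℝ → ℝ)
    (hu : ∀ α, ContDiff ℝ (⊤ : ℕ∞) (fun q : ℝ × ℝ => u α q.1 q.2)) :
    ∀ α ∈ Finset.Icc 1 N, ∀ x t : ℝ,
      (pdt (fun x' t' => ((zhalf zb H l α x' t') ^ 2 - (zhalf zb H l (α - 1) x' t') ^ 2) / 2) x t
          + pdx (fun x' t' =>
              ((zhalf zb H l α x' t') ^ 2 - (zhalf zb H l (α - 1) x' t') ^ 2) / 2
                * u α x' t') x t
        = l α * H x t * w α x t
          + zhalf zb H l α x t * Gex H l u α x t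
          - zhalf zb H l (α - 1) x t * Gex H l u (α - 1) x t)
      ↔ (w α x t
          = -(1 / 2) * pdx (fun x' t' => l α * H x' t' * u α x' t') x t
            - (∑ j ∈ Finset.Icc 1 (α - 1), pdx (fun x' t' => l j * H x' t' * u j x' t') x t)
            + u α x t * pdx (zc zb H l α) x t) := by
  intro α hα x t
  have hzb' := hzb.differentiable (by simp)
  have hH' := hH.differentiable (by simp)
  have hu' := fun j => (hu j).differentiable (by simp)
  have zx := differentiableAt_zhalf_x l hzb' hH'
  have zt := differentiableAt_zhalf_t (zb := zb) l hH'
  obtain ⟨β, rfl⟩ : ∃ β, α = β + 1 := ⟨α - 1, by grind⟩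
  have hh : zhalf zb H l (β + 1) x t - zhalf zb H l β x t ≠ 0 := by
    rw [zhalf_succ_sub_zhalf]
    exact (mul_pos (hl _ hα) (hHpos x t)).ne'
  rw [pdx_zc zb H l (β + 1) x t (zx _ x t) (zx _ x t)]
  simp only [Nat.add_sub_cancel]
  rw [Gex_eq_pdt_zhalf_add_sum_pdx (zb := zb) l hH' hu',
    Gex_eq_pdt_zhalf_add_sum_pdx (zb := zb) l hH' hu',
    sum_Icc_succ_top (Nat.le_add_left 1 β), pdx_layer_flux l hzb' hH' hu',
    ← zhalf_succ_sub_zhalf zb H l β x t, pdt_half_sq_sub_sq (zt (β + 1) x t) (zt β x t),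
    pdx_half_sq_sub_sq_mul (zx (β + 1) x t) (zx β x t) (differentiableAt_fst_slice (hu' _) x t)]
  exact moment_eq_iff hh

/-- the z-moment equation
`∂_t((z_{α+1/2}²−z_{α−1/2}²)/2) + ∂_x((z_{α+1/2}²−z_{α−1/2}²)/2 u_α)
  = h_α w_α + z_{α+1/2} G_{α+1/2} − z_{α−1/2} G_{α−1/2}`
holds iff `w_α = −(1/2)∂_x(h_α u_α) − Σ_{j<α} ∂_x(h_j u_j) + u_α ∂_x z_α`. -/
theorem stmt13 (N : ℕ) (hN : 1 ≤ N) (l : ℕ → ℝ)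
    (hl : ∀ j ∈ Finset.Icc 1 N, 0 < l j) (hlsum : ∑ j ∈ Finset.Icc 1 N, l j = 1)
    (zb : ℝ → ℝ) (H : ℝ → ℝ → ℝ)
    (hzb : ContDiff ℝ (⊤ : ℕ∞) zb)
    (hH : ContDiff ℝ (⊤ : ℕ∞) (fun q : ℝ × ℝ => H q.1 q.2))
    (hHpos : ∀ x t : ℝ, 0 < H x t)
    (u w : ℕ → ℝ → ℝ → ℝ)
    (hu : ∀ α, ContDiff ℝ (⊤ : ℕ∞) (fun q : ℝ × ℝ => u α q.1 q.2))
    (hw : ∀ α, ContDiff ℝ (⊤ : ℕ∞) (fun q : ℝ × ℝ => w α q.1 q.2)) :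
    ∀ α ∈ Finset.Icc 1 N, ∀ x t : ℝ,
      (pdt (fun x' t' => ((zhalf zb H l α x' t') ^ 2 - (zhalf zb H l (α - 1) x' t') ^ 2) / 2) x t
          + pdx (fun x' t' =>
              ((zhalf zb H l α x' t') ^ 2 - (zhalf zb H l (α - 1) x' t') ^ 2) / 2
                * u α x' t') x t
        = l α * H x t * w α x t
          + zhalf zb H l α x t * Gex H l u α x t
          - zhalf zb H l (α - 1) x t * Gex H l u (α - 1) x t)
      ↔ (w α x t
          = -(1 / 2) * pdx (fun x' t' => l α * H x' t' * u α x' t') x t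
            - (∑ j ∈ Finset.Icc 1 (α - 1), pdx (fun x' t' => l j * H x' t' * u j x' t') x t)
            + u α x t * pdx (zc zb H l α) x t) :=
  stmt13_general N l hl zb H hzb hH hHpos u w hu
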